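/- arXiv:1511.02302 — 5 statements merged into one kernel-verified Lean document; each statement's English description precedes it below -/
import Mathlib

section
/- Let n ≥ 2 be an integer, k > 0, and χ ∈ (0, χ_max(k,n)). Let p > 1 be a real number such that if χ² + χ(k-1) > 0 then p < k/(χ² + χ(k-1)). Then 0 < h(p) < 1. -/
/-- Let `n ≥ 2` be an integer, `k > 0`, and
`χ ∈ (0, χ_max(k,n))` where `χ_max(k,n) = -(k-1)/2 + (1/2)·√((k-1)² + 8k/n)`.
Let `p > 1` be real such that if `χ² + χ(k-1) > 0` then `p < k/(χ² + χ(k-1))`.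
Then `0 < h(p) < 1` where `h(p) = (p·χ·(1-k) + 2k)/(p·(1-k)² + 4k)`. -/
theorem stmt0 (n : ℕ) (hn : 2 ≤ n) (k χ p : ℝ) (hk : 0 < k)
    (hχ0 : 0 < χ)
    (hχ1 : χ < -(k - 1) / 2 + (1 / 2) * Real.sqrt ((k - 1) ^ 2 + 8 * k / n))
    (hp1 : 1 < p)
    (hp2 : χ ^ 2 + χ * (k - 1) > 0 → p < k / (χ ^ 2 + χ * (k - 1))) :
    0 < (p * χ * (1 - k) + 2 * k) / (p * (1 - k) ^ 2 + 4 * k) ∧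
      (p * χ * (1 - k) + 2 * k) / (p * (1 - k) ^ 2 + 4 * k) < 1 := by
  have hp0 : 0 < p := lt_trans zero_lt_one hp1
  have hD : 0 < p * (1 - k) ^ 2 + 4 * k := by
    nlinarith [mul_nonneg hp0.le (sq_nonneg (1 - k))]
  have key : ∀ q : ℝ, χ ^ 2 + χ * (k - 1) > 0 → p < k / q → q = χ ^ 2 + χ * (k - 1) →
      p * (χ ^ 2 + χ * (k - 1)) < k := by
    intro q hq hlt hEq
    subst hEq
    exact (lt_div_iff₀ hq).mp hlt
  have hN : 0 < p * χ * (1 - k) + 2 * k := by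
    rcases le_or_gt k 1 with h | h
    · nlinarith [mul_pos hp0 hχ0]
    · have hq : χ ^ 2 + χ * (k - 1) > 0 := by nlinarith
      have hpk : p * (χ ^ 2 + χ * (k - 1)) < k := key _ hq (hp2 hq) rfl
      nlinarith [mul_nonneg hp0.le (sq_nonneg χ)]
  have hlt : p * χ * (1 - k) + 2 * k < p * (1 - k) ^ 2 + 4 * k := by
    rcases le_or_gt ((1 - k) * (χ - (1 - k))) 0 with h | h
    · nlinarith [mul_nonneg hp0.le (neg_nonneg.mpr h)]
    · have h1k : 0 < 1 - k := by nlinarith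
      have hχk : 1 - k < χ := by nlinarith
      have hq : χ ^ 2 + χ * (k - 1) > 0 := by nlinarith
      have hpk : p * (χ ^ 2 + χ * (k - 1)) < k := key _ hq (hp2 hq) rfl
      -- from p*χ*(χ-(1-k)) < k and 0 < 1-k < χ, get p*(1-k)*(χ-(1-k)) < k < 2k
      nlinarith [mul_pos hp0 (mul_pos (sub_pos.mpr hχk) (sub_pos.mpr hχk)),
        mul_pos h1k (sub_pos.mpr hχk), mul_lt_mul_of_pos_right hpk h1k,
        mul_pos hp0 (mul_pos (sub_pos.mpr hχk) h1k)]
  constructor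
  · exact div_pos hN hD
  · rw [div_lt_one hD]; exact hlt
end

section
/- Let n ≥ 3 be an integer, k > 0, and χ ∈ (0, χ_max(k,n)). Define c₀ = inf{ h(p) : 1 < p ≤ n/2 } and c⁰ = sup{ h(p) : 1 < p ≤ n/2 }. Then 0 < c₀ ≤ c⁰ < 1. -/
/-!
Write `c = χ (χ + k - 1)`. The bound `χ < χ_max(k, n)` gives `n c < 2k`, so `p c < k`
for every `0 ≤ p ≤ n/2`. Both `h p > 0` and `h p < 1` follow from `p c < k` after completing
squares: the numerator is `p χ² - p c + 2k` and the denominator minus the numerator is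
`p (χ + k - 1)² - p c + 2k`. Since `h` is continuous on the compact interval `[0, n/2]`, it attains
its extrema there, so these pointwise bounds pass to the infimum and supremum over `(1, n/2]`.
-/

open Set

theorem IsCompact.lt_csInf_image_le_csSup_image_lt {β α : Type*} [TopologicalSpace β]
    [ConditionallyCompleteLinearOrder α] [TopologicalSpace α] [OrderClosedTopology α]
    {K S : Set β} {f : β → α} {a b : α} (hK : IsCompact K) (hf : ContinuousOn f K)
    (hS : S.Nonempty) (hSK : S ⊆ K) (hfK : ∀ x ∈ K, f x ∈ Ioo a b) :
    a < sInf (f '' S) ∧ sInf (f '' S) ≤ sSup (f '' S) ∧ sSup (f '' S) < b := by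
  obtain ⟨x₀, hx₀K, hx₀⟩ := hK.exists_isMinOn (hS.mono hSK) hf
  obtain ⟨x₁, hx₁K, hx₁⟩ := hK.exists_isMaxOn (hS.mono hSK) hf
  have hlow : f x₀ ∈ lowerBounds (f '' S) := by
    rintro _ ⟨x, hx, rfl⟩
    exact hx₀ (hSK hx)
  have hup : f x₁ ∈ upperBounds (f '' S) := by
    rintro _ ⟨x, hx, rfl⟩
    exact hx₁ (hSK hx)
  exact ⟨(hfK x₀ hx₀K).1.trans_le (le_csInf (hS.image f) hlow),
    csInf_le_csSup (hS.image f) ⟨_, hlow⟩ ⟨_, hup⟩,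
    (csSup_le (hS.image f) hup).trans_lt (hfK x₁ hx₁K).2⟩

theorem four_mul_mul_add_lt_of_two_mul_add_lt_sqrt {χ b m : ℝ} (hχ : 0 < χ) (hm : 0 ≤ m)
    (h : 2 * χ + b < √(b ^ 2 + m)) : 4 * (χ * (χ + b)) < m := by
  have hb : |b| ≤ √(b ^ 2 + m) := Real.abs_le_sqrt (by linarith)
  have hsq : (2 * χ + b) ^ 2 < √(b ^ 2 + m) ^ 2 :=
    sq_lt_sq' (by linarith [neg_abs_le b]) h
  rw [Real.sq_sqrt (by positivity)] at hsq
  linarith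

theorem mul_lt_of_mul_lt_of_le {p q c k : ℝ} (hp : 0 ≤ p) (hpq : p ≤ q) (hk : 0 < k)
    (hq : q * c < k) : p * c < k := by
  rcases le_or_gt c 0 with hc | hc
  · exact (mul_nonpos_of_nonneg_of_nonpos hp hc).trans_lt hk
  · exact (mul_le_mul_of_nonneg_right hpq hc.le).trans_lt hq

section Ratio

variable {k χ p : ℝ}

theorem ratio_pos (hk : 0 < k) (hp : 0 ≤ p) (hpχ : p * (χ * (χ + k - 1)) < k) :
    0 < (p * χ * (1 - k) + 2 * k) / (p * (1 - k) ^ 2 + 4 * k) := by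
  apply div_pos _ (by positivity)
  linarith [mul_nonneg hp (sq_nonneg χ)]

theorem ratio_lt_one (hk : 0 < k) (hp : 0 ≤ p) (hpχ : p * (χ * (χ + k - 1)) < k) :
    (p * χ * (1 - k) + 2 * k) / (p * (1 - k) ^ 2 + 4 * k) < 1 := by
  rw [div_lt_one (by positivity)]
  linarith [mul_nonneg hp (sq_nonneg (χ + k - 1))]

end Ratio

/-- Let `n ≥ 3` be an integer, `k > 0`, and `χ ∈ (0, χ_max(k,n))`
where `χ_max(k,n) = -(k-1)/2 + (1/2)·√((k-1)² + 8k/n)`.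
Define `c₀ = inf { h(p) : 1 < p ≤ n/2 }` and `c⁰ = sup { h(p) : 1 < p ≤ n/2 }`,
with `h(p) = (p·χ·(1-k) + 2k)/(p·(1-k)² + 4k)`.  Then `0 < c₀ ≤ c⁰ < 1`. -/
theorem stmt3 (n : ℕ) (hn : 3 ≤ n) (k χ : ℝ) (hk : 0 < k)
    (hχ0 : 0 < χ)
    (hχ1 : χ < -(k - 1) / 2 + (1 / 2) * Real.sqrt ((k - 1) ^ 2 + 8 * k / n)) :
    0 < sInf ((fun p : ℝ => (p * χ * (1 - k) + 2 * k) / (p * (1 - k) ^ 2 + 4 * k)) ''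
          Set.Ioc 1 ((n : ℝ) / 2)) ∧
      sInf ((fun p : ℝ => (p * χ * (1 - k) + 2 * k) / (p * (1 - k) ^ 2 + 4 * k)) ''
          Set.Ioc 1 ((n : ℝ) / 2)) ≤
        sSup ((fun p : ℝ => (p * χ * (1 - k) + 2 * k) / (p * (1 - k) ^ 2 + 4 * k)) ''
          Set.Ioc 1 ((n : ℝ) / 2)) ∧
      sSup ((fun p : ℝ => (p * χ * (1 - k) + 2 * k) / (p * (1 - k) ^ 2 + 4 * k)) ''
          Set.Ioc 1 ((n : ℝ) / 2)) < 1 := by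
  have hn3 : (3 : ℝ) ≤ n := by exact_mod_cast hn
  have hχk : 4 * (χ * (χ + (k - 1))) < 8 * k / n :=
    four_mul_mul_add_lt_of_two_mul_add_lt_sqrt hχ0 (by positivity) (by linarith)
  have hχn : (n / 2) * (χ * (χ + k - 1)) < k := by
    rw [lt_div_iff₀ (by positivity)] at hχk
    linarith
  have hbound : ∀ p ∈ Icc (0 : ℝ) (n / 2), p * (χ * (χ + k - 1)) < k :=
    fun p hp => mul_lt_of_mul_lt_of_le hp.1 hp.2 hk hχn
  refine isCompact_Icc.lt_csInf_image_le_csSup_image_lt ?_ (nonempty_Ioc.2 (by linarith))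
    (Ioc_subset_Icc_self.trans (Icc_subset_Icc_left zero_le_one))
    fun p hp => ⟨ratio_pos hk hp.1 (hbound p hp), ratio_lt_one hk hp.1 (hbound p hp)⟩
  exact ContinuousOn.div (by fun_prop) (by fun_prop) fun p hp => by
    have := hp.1
    positivity
end

section
/- Let k > 0, χ > 0, and let p > 1 be a real number such that if χ² + χ(k-1) > 0 then p < k/(χ² + χ(k-1)). Then for every real r with r_-(p) < r < r_+(p) one has f(r; p, χ, k) = p[(p-1)χ + r + rk]²/(4(p-1)) - prχ - r(r+1)k < 0. -/
/-!
Multiplying `f(r)` by `4(p - 1) > 0` gives a quadratic in `r` with leading coefficient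
`p(k - 1)² + 4k > 0` and discriminant `16(p - 1)²(k² - pχk(k - 1) - pχ²k)`, whose roots are exactly
`r_±(p)`; a quadratic with positive leading coefficient is negative strictly between its roots.
The discriminant is nonnegative because `k² - pχk(k - 1) - pχ²k = k(k - p(χ² + χ(k - 1)))`.
-/

open Real

theorem quadratic_neg_of_mem_Ioo {K : Type*} [Field K] [LinearOrder K] [IsStrictOrderedRing K]
    {a b c s x : K} (ha : 0 < a) (h : discrim a b c = s * s)
    (hx : x ∈ Set.Ioo ((-b - s) / (2 * a)) ((-b + s) / (2 * a))) :
    a * (x * x) + b * x + c < 0 := by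
  have h2a : 0 < 2 * a := by positivity
  have hlow : 2 * a * x + b - s < 0 := by
    have := (lt_div_iff₀ h2a).1 hx.2
    linarith
  have hhigh : 0 < 2 * a * x + b + s := by
    have := (div_lt_iff₀ h2a).1 hx.1
    linarith
  have hprod : 4 * a * (a * (x * x) + b * x + c) = (2 * a * x + b - s) * (2 * a * x + b + s) := by
    rw [discrim] at h
    linear_combination -h
  have : 4 * a * (a * (x * x) + b * x + c) < 0 := hprod ▸ mul_neg_of_neg_of_pos hlow hhigh
  nlinarith

theorem sq_sub_mul_sub_mul_nonneg {k χ p : ℝ} (hk : 0 < k) (hp : 0 ≤ p)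
    (hp2 : χ ^ 2 + χ * (k - 1) > 0 → p < k / (χ ^ 2 + χ * (k - 1))) :
    0 ≤ k ^ 2 - p * χ * k * (k - 1) - p * χ ^ 2 * k := by
  have hD : k ^ 2 - p * χ * k * (k - 1) - p * χ ^ 2 * k
      = k * (k - p * (χ ^ 2 + χ * (k - 1))) := by ring
  rw [hD]
  refine mul_nonneg hk.le ?_
  rcases le_or_gt (χ ^ 2 + χ * (k - 1)) 0 with hX | hX
  · nlinarith [mul_nonpos_of_nonneg_of_nonpos hp hX]
  · have := (lt_div_iff₀ hX).1 (hp2 hX)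
    linarith

theorem stmt5_general (k χ p : ℝ) (hk : 0 < k) (hp1 : 1 < p)
    (hp2 : χ ^ 2 + χ * (k - 1) > 0 → p < k / (χ ^ 2 + χ * (k - 1))) :
    ∀ r : ℝ,
      (p - 1) * ((p * χ * (1 - k) + 2 * k) / (p * (k - 1) ^ 2 + 4 * k) -
          2 * Real.sqrt (k ^ 2 - p * χ * k * (k - 1) - p * χ ^ 2 * k) /
            (p * (k - 1) ^ 2 + 4 * k)) < r →
      r < (p - 1) * ((p * χ * (1 - k) + 2 * k) / (p * (k - 1) ^ 2 + 4 * k) +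
          2 * Real.sqrt (k ^ 2 - p * χ * k * (k - 1) - p * χ ^ 2 * k) /
            (p * (k - 1) ^ 2 + 4 * k)) →
      p * ((p - 1) * χ + r + r * k) ^ 2 / (4 * (p - 1)) - p * r * χ - r * (r + 1) * k < 0 := by
  intro r h1 h2
  set Q := p * (k - 1) ^ 2 + 4 * k
  set M := p * χ * (1 - k) + 2 * k
  set D := k ^ 2 - p * χ * k * (k - 1) - p * χ ^ 2 * k
  have hp : 0 < p - 1 := sub_pos.2 hp1
  have hQ : 0 < Q := by nlinarith [sq_nonneg (k - 1)]
  have hsqrt : √D * √D = D := mul_self_sqrt (sq_sub_mul_sub_mul_nonneg hk (by linarith) hp2)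
  have hdiscrim : discrim Q (-2 * (p - 1) * M) (p * (p - 1) ^ 2 * χ ^ 2)
      = (4 * (p - 1) * √D) * (4 * (p - 1) * √D) := by
    rw [discrim]
    linear_combination (-16 * (p - 1) ^ 2) * hsqrt
  have hroot_lo : (-(-2 * (p - 1) * M) - 4 * (p - 1) * √D) / (2 * Q)
      = (p - 1) * (M / Q - 2 * √D / Q) := by
    field_simp
    ring
  have hroot_hi : (-(-2 * (p - 1) * M) + 4 * (p - 1) * √D) / (2 * Q)
      = (p - 1) * (M / Q + 2 * √D / Q) := by
    field_simp
    ring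
  have hneg := quadratic_neg_of_mem_Ioo (x := r) hQ hdiscrim ⟨hroot_lo ▸ h1, hroot_hi ▸ h2⟩
  have hf : p * ((p - 1) * χ + r + r * k) ^ 2 / (4 * (p - 1)) - p * r * χ - r * (r + 1) * k
      = (Q * (r * r) + -2 * (p - 1) * M * r + p * (p - 1) ^ 2 * χ ^ 2) / (4 * (p - 1)) := by
    field_simp
    ring
  rw [hf]
  exact div_neg_of_neg_of_pos hneg (by positivity)

/-- Let `k > 0`, `χ > 0`, and `p > 1` real such that if
`χ² + χ(k-1) > 0` then `p < k/(χ² + χ(k-1))`.  Then for every real `r` with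
`r₋(p) < r < r₊(p)` one has
`f(r; p, χ, k) = p[(p-1)χ + r + rk]²/(4(p-1)) - prχ - r(r+1)k < 0`, where
`r₊₋(p) = (p-1)·[(pχ(1-k)+2k)/(p(k-1)²+4k) ± 2√(k² - pχk(k-1) - pχ²k)/(p(k-1)²+4k)]`. -/
theorem stmt5 (k χ p : ℝ) (hk : 0 < k) (hχ : 0 < χ) (hp1 : 1 < p)
    (hp2 : χ ^ 2 + χ * (k - 1) > 0 → p < k / (χ ^ 2 + χ * (k - 1))) :
    ∀ r : ℝ,
      (p - 1) * ((p * χ * (1 - k) + 2 * k) / (p * (k - 1) ^ 2 + 4 * k) -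
          2 * Real.sqrt (k ^ 2 - p * χ * k * (k - 1) - p * χ ^ 2 * k) /
            (p * (k - 1) ^ 2 + 4 * k)) < r →
      r < (p - 1) * ((p * χ * (1 - k) + 2 * k) / (p * (k - 1) ^ 2 + 4 * k) +
          2 * Real.sqrt (k ^ 2 - p * χ * k * (k - 1) - p * χ ^ 2 * k) /
            (p * (k - 1) ^ 2 + 4 * k)) →
      p * ((p - 1) * χ + r + r * k) ^ 2 / (4 * (p - 1)) - p * r * χ - r * (r + 1) * k < 0 :=
  stmt5_general k χ p hk hp1 hp2
end

section
/- Let k > 1, χ > 0, and let p be a real number with 1 < p < k/(χ² + χ(k-1)). Then χ/(2χ + k - 1) < h(p) < (2k + χ(1-k))/((1-k)² + 4k), and moreover (2k + χ(1-k))/((1-k)² + 4k) < 2k/(1+k)² < 1. -/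
/-- Let `k > 1`, `χ > 0`, and `1 < p < k/(χ² + χ(k-1))`.  Then
`χ/(2χ+k-1) < h(p) < (2k+χ(1-k))/((1-k)²+4k)` and moreover
`(2k+χ(1-k))/((1-k)²+4k) < 2k/(1+k)² < 1`, where
`h(p) = (pχ(1-k)+2k)/(p(1-k)²+4k)`. -/
theorem stmt8 (k χ p : ℝ) (hk : 1 < k) (hχ : 0 < χ) (hp1 : 1 < p)
    (hp2 : p < k / (χ ^ 2 + χ * (k - 1))) :
    χ / (2 * χ + k - 1) < (p * χ * (1 - k) + 2 * k) / (p * (1 - k) ^ 2 + 4 * k) ∧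
    (p * χ * (1 - k) + 2 * k) / (p * (1 - k) ^ 2 + 4 * k) <
      (2 * k + χ * (1 - k)) / ((1 - k) ^ 2 + 4 * k) ∧
    (2 * k + χ * (1 - k)) / ((1 - k) ^ 2 + 4 * k) < 2 * k / (1 + k) ^ 2 ∧
    2 * k / (1 + k) ^ 2 < 1 := by
  have hk0 : (0:ℝ) < k := by linarith
  have hA : 0 < χ ^ 2 + χ * (k - 1) := by nlinarith
  have hpA : p * (χ ^ 2 + χ * (k - 1)) < k := (lt_div_iff₀ hA).mp hp2
  have hD : 0 < p * (1 - k) ^ 2 + 4 * k := by nlinarith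
  have hD1 : 0 < (1 - k) ^ 2 + 4 * k := by nlinarith
  have hE : 0 < 2 * χ + k - 1 := by linarith
  have hE2 : 0 < (1 + k) ^ 2 := by nlinarith
  refine ⟨?_, ?_, ?_, ?_⟩
  · rw [div_lt_div_iff₀ hE hD]
    nlinarith [mul_pos hχ (sub_pos.mpr hk)]
  · rw [div_lt_div_iff₀ hD hD1]
    nlinarith [mul_pos (mul_pos hk0 (sub_pos.mpr hk)) hE, mul_pos hk0 (sub_pos.mpr hp1)]
  · rw [div_lt_div_iff₀ hD1 hE2]
    nlinarith [mul_pos hχ (sub_pos.mpr hk)]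
  · rw [div_lt_one hE2]; nlinarith
end

section
/- Let 0 < k < 1 and 1-k < χ. Then for every real p with 1 < p < k/(χ² - χ(1-k)) one has (2k + χ(1-k))/((1-k)² + 4k) < h(p) < χ/(2χ + k - 1), and moreover 0 < (1-k²)/((1+k)²) < (2k + χ(1-k))/((1-k)² + 4k) and χ/(2χ + k - 1) < 1. -/
/-- Let `0 < k < 1` and `1-k < χ`.  Then for every real `p` with
`1 < p < k/(χ² - χ(1-k))` one has
`(2k+χ(1-k))/((1-k)²+4k) < h(p) < χ/(2χ+k-1)`, and moreover
`0 < (1-k²)/(1+k)² < (2k+χ(1-k))/((1-k)²+4k)` and `χ/(2χ+k-1) < 1`, where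
`h(p) = (pχ(1-k)+2k)/(p(1-k)²+4k)`. -/
theorem stmt11 (k χ : ℝ) (hk0 : 0 < k) (hk1 : k < 1) (hχ : 1 - k < χ) :
    (∀ p : ℝ, 1 < p → p < k / (χ ^ 2 - χ * (1 - k)) →
      (2 * k + χ * (1 - k)) / ((1 - k) ^ 2 + 4 * k) <
        (p * χ * (1 - k) + 2 * k) / (p * (1 - k) ^ 2 + 4 * k) ∧
      (p * χ * (1 - k) + 2 * k) / (p * (1 - k) ^ 2 + 4 * k) < χ / (2 * χ + k - 1)) ∧
    0 < (1 - k ^ 2) / (1 + k) ^ 2 ∧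
    (1 - k ^ 2) / (1 + k) ^ 2 < (2 * k + χ * (1 - k)) / ((1 - k) ^ 2 + 4 * k) ∧
    χ / (2 * χ + k - 1) < 1 := by
  have hχ0 : 0 < χ := lt_of_le_of_lt (by linarith) hχ
  have hχsq : 0 < χ ^ 2 - χ * (1 - k) := by nlinarith
  have hd1 : (0:ℝ) < (1 - k) ^ 2 + 4 * k := by nlinarith
  have hd3 : (0:ℝ) < 2 * χ + k - 1 := by linarith
  refine ⟨fun p hp1 hp2 => ?_, ?_, ?_, ?_⟩
  · have hpk : p * (χ ^ 2 - χ * (1 - k)) < k := by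
      rw [lt_div_iff₀ hχsq] at hp2; linarith
    have hd2 : (0:ℝ) < p * (1 - k) ^ 2 + 4 * k := by nlinarith
    constructor
    · rw [div_lt_div_iff₀ hd1 hd2]
      nlinarith [mul_pos (mul_pos (mul_pos hk0 (sub_pos.mpr hp1))
        (show (0:ℝ) < 1 - k by linarith)) (show (0:ℝ) < 2 * χ - (1 - k) by linarith)]
    · rw [div_lt_div_iff₀ hd2 hd3]
      nlinarith
  · exact div_pos (by nlinarith) (by positivity)
  · rw [div_lt_div_iff₀ (by positivity) hd1]
    nlinarith [mul_pos (mul_pos (sub_pos.mpr hχ) (show (0:ℝ) < 1 - k by linarith))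
      (show (0:ℝ) < (1 + k) ^ 2 by positivity)]
  · rw [div_lt_one hd3]; linarith
end
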